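/- Let P : Cᵒᵖ → Pos be an existential doctrine, X an object of C and φ ∈ P(X). Then P_(X,φ) is existential and (F_X, 𝔣) is an existential morphism: (i) for all objects B, C the map ∃^B_{X×C} : P(X×C×B) → P(X×C) restricts to a map (∃_{X,φ})^B_C : P(X×C×B)_{↓P(pr₁)(φ)} → P(X×C)_{↓P(pr₁)(φ)} (that is, β ≤ P(pr₁)(φ) implies ∃^B_{X×C}(β) ≤ P(pr₁)(φ)); (ii) this restriction is left adjoint to the reindexing P_(X,φ)(pr₁) = P(⟨pr₁,pr₂⟩) and satisfies the Beck–Chevalley condition and Frobenius reciprocity in P_(X,φ); (iii) for every β ∈ P(C×B), 𝔣_C(∃^B_C(β)) = ∃^B_{X×C}(𝔣_{C×B}(β)). -/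

import Mathlib

open CategoryTheory CategoryTheory.Limits

universe w w' v u v' u'

/-- A primary doctrine: a functor `Cᵒᵖ → Pos` (given by the fibers `obj` together with the
reindexing maps `map`) on a category `C` with finite products, such that every fiber is an
inf-semilattice with a top element and every reindexing preserves binary meets and top. -/
structure PrimaryDoctrine (C : Type u) [Category.{v} C] where
  obj : C → Type w
  [sl : ∀ A, SemilatticeInf (obj A)]
  [tp : ∀ A, OrderTop (obj A)]
  map : ∀ {A B : C}, (A ⟶ B) → obj B → obj A
  map_id : ∀ (A : C) (α : obj A), map (𝟙 A) α = α
  map_comp : ∀ {A B D : C} (f : A ⟶ B) (g : B ⟶ D) (α : obj D),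
      map (f ≫ g) α = map f (map g α)
  map_inf : ∀ {A B : C} (f : A ⟶ B) (α β : obj B), map f (α ⊓ β) = map f α ⊓ map f β
  map_top : ∀ {A B : C} (f : A ⟶ B), map f (⊤ : obj B) = ⊤

attribute [instance] PrimaryDoctrine.sl PrimaryDoctrine.tp

/-- The component at `A` of the natural transformation `𝔣 : P ⟶ P_(X,φ) ∘ F_Xᵒᵖ`,
`𝔣_A(α) = P(pr₁)(φ) ⊓ P(pr₂)(α) ∈ P(X ⨯ A)`. -/
noncomputable def PrimaryDoctrine.frak {C : Type u} [Category.{v} C] [HasFiniteProducts C]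
    (P : PrimaryDoctrine.{w} C) {X : C} (φ : P.obj X) (A : C) (α : P.obj A) :
    P.obj (X ⨯ A) :=
  P.map prod.fst φ ⊓ P.map prod.snd α

/-- Existential structure on a primary doctrine: for all objects `B, A` a left adjoint
`∃^B_A : P(A ⨯ B) → P(A)` to `P(pr₁)`, satisfying Beck–Chevalley and Frobenius. -/
structure PrimaryDoctrine.ExistentialData {C : Type u} [Category.{v} C] [HasFiniteProducts C]
    (P : PrimaryDoctrine.{w} C) where
  ex : ∀ (B A : C), P.obj (A ⨯ B) → P.obj A
  adj : ∀ {B A : C} (α : P.obj (A ⨯ B)) (β : P.obj A),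
      ex B A α ≤ β ↔ α ≤ P.map (prod.fst : A ⨯ B ⟶ A) β
  bc : ∀ {B A A' : C} (f : A' ⟶ A) (α : P.obj (A ⨯ B)),
      ex B A' (P.map (prod.map f (𝟙 B)) α) = P.map f (ex B A α)
  frob : ∀ {B A : C} (α : P.obj (A ⨯ B)) (β : P.obj A),
      ex B A (α ⊓ P.map (prod.fst : A ⨯ B ⟶ A) β) = ex B A α ⊓ β

theorem PrimaryDoctrine.map_mono {C : Type u} [Category.{v} C] (P : PrimaryDoctrine.{w} C)
    {A B : C} (f : A ⟶ B) {α β : P.obj B} (h : α ≤ β) : P.map f α ≤ P.map f β := by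
  calc P.map f α = P.map f (α ⊓ β) := by rw [inf_eq_left.mpr h]
    _ = P.map f α ⊓ P.map f β := P.map_inf f α β
    _ ≤ P.map f β := inf_le_right

theorem pd_assoc_hom_fst {C : Type u} [Category.{v} C] [HasFiniteProducts C] (X Y Z : C) :
    (prod.associator X Y Z).hom ≫ prod.fst = prod.fst ≫ prod.fst := by
  simp only [prod.associator_hom]; erw [prod.lift_fst]

theorem pd_assoc_hom_snd_fst {C : Type u} [Category.{v} C] [HasFiniteProducts C] (X Y Z : C) :
    (prod.associator X Y Z).hom ≫ prod.snd ≫ prod.fst = prod.fst ≫ prod.snd := by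
  simp only [prod.associator_hom]; erw [prod.lift_snd_assoc, prod.lift_fst]

theorem pd_assoc_hom_snd_snd {C : Type u} [Category.{v} C] [HasFiniteProducts C] (X Y Z : C) :
    (prod.associator X Y Z).hom ≫ prod.snd ≫ prod.snd = prod.snd := by
  simp only [prod.associator_hom]; erw [prod.lift_snd_assoc, prod.lift_snd]

theorem pd_assoc_inv_fst_fst {C : Type u} [Category.{v} C] [HasFiniteProducts C] (X Y Z : C) :
    (prod.associator X Y Z).inv ≫ prod.fst ≫ prod.fst = prod.fst := by
  simp only [prod.associator_inv]; erw [prod.lift_fst_assoc, prod.lift_fst]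

theorem pd_assoc_inv_fst_snd {C : Type u} [Category.{v} C] [HasFiniteProducts C] (X Y Z : C) :
    (prod.associator X Y Z).inv ≫ prod.fst ≫ prod.snd = prod.snd ≫ prod.fst := by
  simp only [prod.associator_inv]; erw [prod.lift_fst_assoc, prod.lift_snd]

/-- If `P` is existential then so is `P_(X,φ)` (with existential
quantifiers the restrictions of `∃^B_{X ⨯ C}`, up to the associativity isomorphism
`(X ⨯ C) ⨯ B ≅ X ⨯ (C ⨯ B)`), and `(F_X, 𝔣)` is an existential morphism. -/
theorem pXphi_existential {C : Type u} [Category.{v} C] [HasFiniteProducts C]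
    (P : PrimaryDoctrine.{w} C) (X : C) (φ : P.obj X) (E : P.ExistentialData) :
    -- (i) `∃^B_{X ⨯ C}` restricts to the downsets
    (∀ (Cc B : C) (β : P.obj (X ⨯ (Cc ⨯ B))), β ≤ P.map prod.fst φ →
      E.ex B (X ⨯ Cc) (P.map (prod.associator X Cc B).hom β) ≤ P.map prod.fst φ) ∧
    -- (ii) the restriction is left adjoint to the reindexing `P_(X,φ)(pr₁) = P(⟨pr₁,pr₂⟩)`…
    (∀ (Cc B : C) (β : P.obj (X ⨯ (Cc ⨯ B))) (γ : P.obj (X ⨯ Cc)),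
      β ≤ P.map prod.fst φ → γ ≤ P.map prod.fst φ →
      (E.ex B (X ⨯ Cc) (P.map (prod.associator X Cc B).hom β) ≤ γ ↔
        β ≤ P.map (prod.map (𝟙 X) prod.fst) γ)) ∧
    -- … satisfies the Beck–Chevalley condition in `P_(X,φ)` (w.r.t. coKleisli morphisms
    -- `f₂ : C' ⇝ C` and the `C_X`-product map `f₂ ×_{C_X} id_B`) …
    (∀ (Cc Cc' B : C) (f₂ : (X ⨯ Cc' : C) ⟶ Cc) (β : P.obj (X ⨯ (Cc ⨯ B))),
      β ≤ P.map prod.fst φ →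
      E.ex B (X ⨯ Cc')
          (P.map (prod.associator X Cc' B).hom
            (P.map (prod.lift prod.fst
              (prod.lift (prod.map (𝟙 X) prod.fst ≫ f₂) (prod.snd ≫ prod.snd))) β))
        = P.map (prod.lift prod.fst f₂)
            (E.ex B (X ⨯ Cc) (P.map (prod.associator X Cc B).hom β))) ∧
    -- … and Frobenius reciprocity in `P_(X,φ)`
    (∀ (Cc B : C) (α : P.obj (X ⨯ (Cc ⨯ B))) (β : P.obj (X ⨯ Cc)),
      α ≤ P.map prod.fst φ → β ≤ P.map prod.fst φ →
      E.ex B (X ⨯ Cc)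
          (P.map (prod.associator X Cc B).hom (α ⊓ P.map (prod.map (𝟙 X) prod.fst) β))
        = E.ex B (X ⨯ Cc) (P.map (prod.associator X Cc B).hom α) ⊓ β) ∧
    -- (iii) `(F_X, 𝔣)` is existential: `𝔣_C(∃^B_C(β)) = ∃^B_{X ⨯ C}(𝔣_{C ⨯ B}(β))`
    (∀ (Cc B : C) (β : P.obj (Cc ⨯ B)),
      P.frak φ Cc (E.ex B Cc β)
        = E.ex B (X ⨯ Cc) (P.map (prod.associator X Cc B).hom (P.frak φ (Cc ⨯ B) β))) := by
  -- key morphism computations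
  refine ⟨?_, ?_, ?_, ?_, ?_⟩
  · intro Cc B β h
    refine (E.adj _ _).mpr ?_
    have h1 : ((prod.associator X Cc B).hom ≫ prod.fst : (X ⨯ Cc) ⨯ B ⟶ X)
        = (prod.fst : (X ⨯ Cc) ⨯ B ⟶ X ⨯ Cc) ≫ prod.fst := by simp [-prod.associator_hom, pd_assoc_hom_fst, pd_assoc_hom_snd_fst, pd_assoc_hom_snd_snd]
    calc P.map (prod.associator X Cc B).hom β
        ≤ P.map (prod.associator X Cc B).hom (P.map prod.fst φ) := P.map_mono _ h
      _ = P.map (prod.fst : (X ⨯ Cc) ⨯ B ⟶ X ⨯ Cc) (P.map prod.fst φ) := by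
          rw [← P.map_comp, ← P.map_comp, h1]
  · intro Cc B β γ hβ hγ
    rw [E.adj]
    have h2 : ((prod.associator X Cc B).hom ≫ prod.map (𝟙 X) (prod.fst : Cc ⨯ B ⟶ Cc)
        : (X ⨯ Cc) ⨯ B ⟶ X ⨯ Cc) = prod.fst := by
      ext <;> simp [-prod.associator_hom, pd_assoc_hom_fst, pd_assoc_hom_snd_fst, pd_assoc_hom_snd_snd]
    constructor
    · intro h
      have := P.map_mono (prod.associator X Cc B).inv h
      have h2' : ((prod.associator X Cc B).inv ≫ prod.fst
          : X ⨯ (Cc ⨯ B) ⟶ X ⨯ Cc) = prod.map (𝟙 X) prod.fst := by ext <;> simp [-prod.associator_inv, pd_assoc_inv_fst_fst, pd_assoc_inv_fst_snd]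
      rwa [← P.map_comp, ← P.map_comp, Iso.inv_hom_id, P.map_id, h2'] at this
    · intro h
      have := P.map_mono (prod.associator X Cc B).hom h
      rwa [← P.map_comp, h2] at this
  · intro Cc Cc' B f₂ β hβ
    rw [← E.bc (prod.lift prod.fst f₂) (P.map (prod.associator X Cc B).hom β),
      ← P.map_comp, ← P.map_comp]
    congr 2
    ext
    · simp [-prod.associator_hom, pd_assoc_hom_fst, pd_assoc_hom_snd_fst, pd_assoc_hom_snd_snd, ← prod.comp_lift]
      erw [prod.lift_fst, prod.lift_fst (f := prod.fst) (g := f₂), pd_assoc_hom_fst]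
    · simp [-prod.associator_hom, pd_assoc_hom_fst, pd_assoc_hom_snd_fst, pd_assoc_hom_snd_snd, ← prod.comp_lift]
      erw [prod.lift_snd_assoc, prod.lift_fst, prod.lift_snd]
      have h2c : ((prod.associator X Cc' B).hom ≫ prod.map (𝟙 X) (prod.fst : Cc' ⨯ B ⟶ Cc')
          : (X ⨯ Cc') ⨯ B ⟶ X ⨯ Cc') = prod.fst := by
        ext <;> simp [-prod.associator_hom, pd_assoc_hom_fst, pd_assoc_hom_snd_fst, pd_assoc_hom_snd_snd]
      erw [← Category.assoc, h2c]
    · simp [-prod.associator_hom, pd_assoc_hom_fst, pd_assoc_hom_snd_fst, pd_assoc_hom_snd_snd, ← prod.comp_lift]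
      erw [prod.lift_snd_assoc, prod.lift_snd]
      simp [-prod.associator_hom, pd_assoc_hom_fst, pd_assoc_hom_snd_fst, pd_assoc_hom_snd_snd]
  · intro Cc B α β hα hβ
    have h3 : ((prod.associator X Cc B).hom ≫ prod.map (𝟙 X) (prod.fst : Cc ⨯ B ⟶ Cc)
        : (X ⨯ Cc) ⨯ B ⟶ X ⨯ Cc) = prod.fst := by
      ext <;> simp [-prod.associator_hom, pd_assoc_hom_fst, pd_assoc_hom_snd_fst, pd_assoc_hom_snd_snd]
    rw [P.map_inf, ← P.map_comp, h3, E.frob]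
  · intro Cc B β
    have h4 : ((prod.associator X Cc B).hom ≫ prod.snd : (X ⨯ Cc) ⨯ B ⟶ Cc ⨯ B)
        = prod.map (prod.snd : X ⨯ Cc ⟶ Cc) (𝟙 B) := by ext <;> simp [-prod.associator_hom, pd_assoc_hom_fst, pd_assoc_hom_snd_fst, pd_assoc_hom_snd_snd]
    have h5 : ((prod.associator X Cc B).hom ≫ prod.fst : (X ⨯ Cc) ⨯ B ⟶ X)
        = (prod.fst : (X ⨯ Cc) ⨯ B ⟶ X ⨯ Cc) ≫ prod.fst := by simp [-prod.associator_hom, pd_assoc_hom_fst, pd_assoc_hom_snd_fst, pd_assoc_hom_snd_snd]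
    unfold PrimaryDoctrine.frak
    rw [P.map_inf, ← P.map_comp, ← P.map_comp, h4, h5, P.map_comp, ← E.bc,
      inf_comm (P.map prod.fst φ),
      inf_comm (P.map (prod.fst : (X ⨯ Cc) ⨯ B ⟶ X ⨯ Cc) (P.map prod.fst φ)), E.frob]
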